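/- Let C and D be locally noetherian Grothendieck categories and let (F, G) be a Frobenius pair of functors between C and D (i.e., G : D → C is both left and right adjoint to F : C → D). Then F and G preserve finitely generated objects, and the restrictions F_f : C_f → D_f and G_f : D_f → C_f form a Frobenius pair between the subcategories of finitely generated objects. -/

import Mathlib

open CategoryTheory CategoryTheory.Limits

universe w v u v' u'

namespace Paper

variable {C : Type u} [Category.{v} C]

/-- An object `M` is finitely generated if every directed family of subobjects of `M`
whose supremum is `⊤` (i.e. whose only upper bound is `⊤`) contains `⊤`. -/
def IsFGObj (M : C) : Prop :=
  ∀ (ι : Type v), Nonempty ι → ∀ (f : ι → Subobject M),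
    (∀ i j, ∃ k, f i ≤ f k ∧ f j ≤ f k) →
    (∀ N : Subobject M, (∀ i, f i ≤ N) → N = ⊤) →
    ∃ i, f i = ⊤

/-- A noetherian object: every ascending chain of subobjects stabilizes. -/
def IsNoethObj (M : C) : Prop :=
  ∀ f : ℕ →o Subobject M, ∃ n, ∀ m, n ≤ m → f m = f n

/-- A category is locally finitely generated if it has a family of
finitely generated generators. -/
def LocallyFG (C : Type u) [Category.{v} C] : Prop :=
  ∃ (ι : Type v) (G : ι → C), (∀ i, IsFGObj (G i)) ∧ ObjectProperty.IsSeparating (Set.range G)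

/-- Locally noetherian: locally finitely generated and every finitely generated object
is noetherian. -/
def LocallyNoetherian (C : Type u) [Category.{v} C] : Prop :=
  LocallyFG C ∧ ∀ M : C, IsFGObj M → IsNoethObj M

end Paper

open Paper

section ConstColim

variable {J : Type w} [Category.{w} J] {C : Type u} [Category.{v} C]

/-- The cocone over a constant functor with all legs the identity. -/
@[simps]
def constIdCocone (J : Type w) [Category.{w} J] (X : C) :
    Cocone ((Functor.const J).obj X) where
  pt := X
  ι := { app := fun _ => 𝟙 X }

lemma constColimit_ι_eq [IsFiltered J] [HasColimitsOfShape J C] (X : C) (i j : J) :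
    colimit.ι ((Functor.const J).obj X) i = colimit.ι ((Functor.const J).obj X) j := by
  rw [← colimit.w ((Functor.const J).obj X) (IsFiltered.leftToMax i j),
    ← colimit.w ((Functor.const J).obj X) (IsFiltered.rightToMax i j)]
  simp

lemma isIso_constDesc [IsFiltered J] [HasColimitsOfShape J C] (X : C) :
    IsIso (colimit.desc ((Functor.const J).obj X) (constIdCocone J X)) := by
  haveI : Nonempty J := IsFiltered.nonempty
  let j₀ : J := Classical.arbitrary J
  refine ⟨colimit.ι ((Functor.const J).obj X) j₀, ?_, ?_⟩
  · apply colimit.hom_ext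
    intro i
    erw [colimit.ι_desc_assoc]
    simp [constColimit_ι_eq X i j₀]
    exact Category.id_comp _
  · exact colimit.ι_desc _ _

end ConstColim

section Key

variable {C : Type u} [Category.{v} C] {D : Type u'} [Category.{v} D]

/-- Key lemma: if `G ⊣ F` and `F ⊣ G` with `C` an AB5 abelian category with colimits,
then `F` preserves finitely generated objects. -/
lemma key [Abelian C] [Abelian D] [HasColimits C] [HasColimits D]
    [HasFilteredColimits C] [AB5 C]
    (F : C ⥤ D) (G : D ⥤ C) (adjL : G ⊣ F) (adjR : F ⊣ G)
    (M : C) (hM : IsFGObj M) : IsFGObj (F.obj M) := by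
  intro ι hι f hdir hub
  haveI : Nonempty ι := hι
  letI : Preorder ι := Preorder.lift f
  haveI : IsDirected ι (· ≤ ·) := ⟨fun i j => hdir i j⟩
  haveI : IsFiltered ι := isFiltered_of_directed_le_nonempty ι
  haveI : PreservesColimitsOfSize.{v, v} G := adjL.leftAdjoint_preservesColimits
  haveI : PreservesColimitsOfSize.{0, 0} G := adjL.leftAdjoint_preservesColimits
  haveI : PreservesLimitsOfSize.{0, 0} G := adjR.rightAdjoint_preservesLimits
  -- the diagram of subobjects of `F.obj M`
  have fmono : Monotone f := fun i j h => h
  let Df : ι ⥤ D := fmono.functor ⋙ Subobject.underlying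
  have harr : ∀ (i j : ι) (h : i ⟶ j), Df.map h ≫ (f j).arrow =
      (f i).arrow ≫ ((Functor.const ι).obj (F.obj M)).map h := by
    intro i j h
    simp only [Functor.comp_map, Functor.const_obj_map, Df]
    rw [Category.comp_id]
    exact Subobject.underlying_arrow (fmono.functor.map h)
  let arr : Df ⟶ (Functor.const ι).obj (F.obj M) :=
    { app := fun i => (f i).arrow
      naturality := fun i j h => harr i j h }
  let t : colimit Df ⟶ F.obj M := colimit.desc Df ⟨F.obj M, arr⟩
  have hιt : ∀ i, colimit.ι Df i ≫ t = (f i).arrow := fun i => colimit.ι_desc _ i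
  -- `t` is an epimorphism
  haveI ht : Epi t := by
    have hle : ∀ i, f i ≤ Subobject.mk (image.ι t) := fun i =>
      Subobject.le_mk_of_comm (colimit.ι Df i ≫ factorThruImage t)
        (by erw [Category.assoc, image.fac, hιt])
    have htop : Subobject.mk (image.ι t) = ⊤ := hub _ hle
    haveI : IsIso (image.ι t) := (Subobject.isIso_iff_mk_eq_top _).2 htop
    rw [← image.fac t]
    exact epi_comp _ _
  haveI hGt : Epi (G.map t) := G.map_epi t
  -- now work in C
  let η : M ⟶ G.obj (F.obj M) := adjR.unit.app M
  let W : ι ⥤ C := Df ⋙ G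
  have hγ : ∀ (i j : ι) (h : i ⟶ j), W.map h ≫ G.map ((f j).arrow) =
      G.map ((f i).arrow) ≫ ((Functor.const ι).obj (G.obj (F.obj M))).map h := by
    intro i j h
    have h2 : Subobject.underlying.map (fmono.functor.map h) ≫ (f j).arrow =
        (f i).arrow := Subobject.underlying_arrow (fmono.functor.map h)
    simp only [Functor.comp_map, Functor.const_obj_map, W, Df, ← G.map_comp, h2]
    erw [← G.map_comp, h2]
    simp
  let γ : W ⟶ (Functor.const ι).obj (G.obj (F.obj M)) :=
    { app := fun i => G.map ((f i).arrow)
      naturality := fun i j h => hγ i j h }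
  let δ : (Functor.const ι).obj M ⟶ (Functor.const ι).obj (G.obj (F.obj M)) :=
    (Functor.const ι).map η
  let QQ := pullback γ δ
  let fstN : QQ ⟶ W := pullback.fst γ δ
  let sndN : QQ ⟶ (Functor.const ι).obj M := pullback.snd γ δ
  have ipw : ∀ i, IsPullback (fstN.app i) (sndN.app i) (γ.app i) (δ.app i) := fun i =>
    (IsPullback.of_hasPullback γ δ).map ((evaluation ι C).obj i)
  haveI hmono : ∀ i, Mono (sndN.app i) := by
    intro i
    haveI : Mono (γ.app i) := by
      show Mono (G.map ((f i).arrow))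
      infer_instance
    have := PullbackCone.mono_snd_of_is_pullback_of_mono (ipw i).isLimit
    rwa [IsPullback.cone_snd] at this
  let g : ι → Subobject M := fun i => Subobject.mk (sndN.app i)
  have gmono : ∀ i k, i ≤ k → g i ≤ g k := by
    intro i k h
    refine Subobject.mk_le_mk_of_comm (QQ.map h.hom) ?_
    have := sndN.naturality h.hom
    simpa using this
  -- upper bounds of the pulled-back family are ⊤
  have hub' : ∀ N : Subobject M, (∀ i, g i ≤ N) → N = ⊤ := by
    intro N hN
    -- the two constant-colimit isomorphisms
    let e : colimit ((Functor.const ι).obj (G.obj (F.obj M))) ⟶ G.obj (F.obj M) :=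
      colimit.desc _ (constIdCocone ι (G.obj (F.obj M)))
    haveI : IsIso e := isIso_constDesc _
    let eM : colimit ((Functor.const ι).obj M) ⟶ M :=
      colimit.desc _ (constIdCocone ι M)
    -- `colim.map γ` is epi
    have hv : colim.map γ ≫ e = (preservesColimitIso G Df).inv ≫ G.map t := by
      apply colimit.hom_ext
      intro i
      rw [colimit.ι_map_assoc,
        show colimit.ι ((Functor.const ι).obj (G.obj (F.obj M))) i ≫ e = 𝟙 _ from
          colimit.ι_desc _ i, Category.comp_id, ← Category.assoc,
        show colimit.ι W i ≫ (preservesColimitIso G Df).inv = G.map (colimit.ι Df i) from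
          ι_preservesColimitIso_inv G Df i, ← G.map_comp, hιt]
    have h1 : Epi (colim.map γ ≫ e) := by
      rw [hv]; exact epi_comp _ _
    haveI hvepi : Epi (colim.map γ) := by
      have h2 : colim.map γ = (colim.map γ ≫ e) ≫ inv e := by simp
      haveI := h1
      rw [h2]; exact epi_comp _ _
    have big : IsPullback (colim.map fstN) (colim.map sndN) (colim.map γ) (colim.map δ) :=
      (IsPullback.of_hasPullback γ δ).map colim
    haveI hsnd : Epi (colim.map sndN) := by
      show Epi (colim.map (pullback.snd γ δ))
      rw [← big.isoPullback_hom_snd]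
      exact epi_comp _ _
    -- factor through N
    have hfac : ∀ i, Subobject.ofMkLE _ _ (hN i) ≫ N.arrow = sndN.app i := fun i =>
      Subobject.ofMkLE_arrow (hN i)
    let cN : Cocone QQ :=
      ⟨(N : C),
        { app := fun i => Subobject.ofMkLE _ _ (hN i)
          naturality := fun i j h => by
            rw [← cancel_mono N.arrow]
            simp only [Category.assoc, Functor.const_obj_map, Category.comp_id, hfac]
            simpa using sndN.naturality h }⟩
    have hc2 : colim.map sndN ≫ eM = colimit.desc QQ cN ≫ N.arrow := by
      apply colimit.hom_ext
      intro i
      rw [colimit.ι_map_assoc,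
        show colimit.ι ((Functor.const ι).obj M) i ≫ eM = 𝟙 _ from colimit.ι_desc _ i,
        Category.comp_id, colimit.ι_desc_assoc]
      exact (hfac i).symm
    haveI hce : Epi (colim.map sndN ≫ eM) := by
      haveI : IsIso eM := isIso_constDesc _
      exact epi_comp _ _
    haveI : Epi (colimit.desc QQ cN ≫ N.arrow) := by rwa [hc2] at hce
    haveI : Epi N.arrow := epi_of_epi (colimit.desc QQ cN) N.arrow
    haveI : IsIso N.arrow := isIso_of_mono_of_epi _
    exact (Subobject.isIso_arrow_iff_eq_top N).1 inferInstance
  obtain ⟨i, hgi⟩ := hM ι hι g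
    (fun i j => by obtain ⟨k, h1, h2⟩ := hdir i j; exact ⟨k, gmono _ _ h1, gmono _ _ h2⟩)
    hub'
  haveI : IsIso (sndN.app i) := (Subobject.isIso_iff_mk_eq_top _).2 hgi
  let s : M ⟶ W.obj i := inv (sndN.app i) ≫ fstN.app i
  have hs : s ≫ G.map ((f i).arrow) = η := by
    have hw : fstN.app i ≫ γ.app i = sndN.app i ≫ δ.app i := (ipw i).w
    have : γ.app i = G.map ((f i).arrow) := rfl
    erw [← this]
    simp only [Category.assoc, s, hw]
    rw [IsIso.inv_hom_id_assoc]
    rfl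
  have hsplit : (F.map s ≫ adjR.counit.app (Df.obj i)) ≫ (f i).arrow = 𝟙 (F.obj M) := by
    have hnat : F.map (G.map ((f i).arrow)) ≫ adjR.counit.app (F.obj M) =
        adjR.counit.app (Df.obj i) ≫ (f i).arrow := by
      exact adjR.counit.naturality ((f i).arrow)
    erw [Category.assoc, ← hnat, ← Category.assoc, ← F.map_comp, hs]
    exact adjR.left_triangle_components M
  haveI : IsSplitEpi ((f i).arrow) := ⟨⟨⟨F.map s ≫ adjR.counit.app (Df.obj i), hsplit⟩⟩⟩
  haveI : IsIso ((f i).arrow) := isIso_of_mono_of_epi _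
  exact ⟨i, (Subobject.isIso_arrow_iff_eq_top _).1 inferInstance⟩

end Key

/-- A Frobenius pair `(F, G)` between locally noetherian Grothendieck
categories preserves finitely generated objects, and the restrictions to the full
subcategories of finitely generated objects form a Frobenius pair. -/
theorem stmt6 {C : Type u} [Category.{v} C] [Abelian C] [HasColimits C]
    [HasFilteredColimits C] [AB5 C] (hC : LocallyNoetherian C)
    {D : Type u'} [Category.{v} D] [Abelian D] [HasColimits D]
    [HasFilteredColimits D] [AB5 D] (hD : LocallyNoetherian D)
    (F : C ⥤ D) (G : D ⥤ C) (adj₁ : G ⊣ F) (adj₂ : F ⊣ G) :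
    (∀ M : C, IsFGObj M → IsFGObj (F.obj M)) ∧
    (∀ N : D, IsFGObj N → IsFGObj (G.obj N)) ∧
    ∃ (F' : ObjectProperty.FullSubcategory (IsFGObj (C := C)) ⥤ ObjectProperty.FullSubcategory (IsFGObj (C := D)))
      (G' : ObjectProperty.FullSubcategory (IsFGObj (C := D)) ⥤ ObjectProperty.FullSubcategory (IsFGObj (C := C))),
      Nonempty (F' ⋙ ObjectProperty.ι (IsFGObj (C := D)) ≅
        ObjectProperty.ι (IsFGObj (C := C)) ⋙ F) ∧
      Nonempty (G' ⋙ ObjectProperty.ι (IsFGObj (C := C)) ≅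
        ObjectProperty.ι (IsFGObj (C := D)) ⋙ G) ∧
      Nonempty (G' ⊣ F') ∧ Nonempty (F' ⊣ G') := by
  have hF : ∀ M : C, IsFGObj M → IsFGObj (F.obj M) := fun M hM => key F G adj₁ adj₂ M hM
  have hG : ∀ N : D, IsFGObj N → IsFGObj (G.obj N) := fun N hN => key G F adj₂ adj₁ N hN
  refine ⟨hF, hG,
    ObjectProperty.lift _ (ObjectProperty.ι _ ⋙ F) (fun X => hF _ X.2),
    ObjectProperty.lift _ (ObjectProperty.ι _ ⋙ G) (fun Y => hG _ Y.2),
    ⟨ObjectProperty.liftCompιIso _ _ _⟩,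
    ⟨ObjectProperty.liftCompιIso _ _ _⟩, ⟨?_⟩, ⟨?_⟩⟩
  · exact Adjunction.mkOfHomEquiv
      { homEquiv := fun X Y =>
          { toFun := fun h => ObjectProperty.homMk (adj₁.homEquiv X.obj Y.obj h.hom)
            invFun := fun h => ObjectProperty.homMk ((adj₁.homEquiv X.obj Y.obj).symm h.hom)
            left_inv := fun h => by ext; simp
            right_inv := fun h => by ext; simp }
        homEquiv_naturality_left_symm := fun f g => by
          ext; simp [adj₁.homEquiv_naturality_left_symm]
        homEquiv_naturality_right := fun f g => by
          ext; simp [adj₁.homEquiv_naturality_right] }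
  · exact Adjunction.mkOfHomEquiv
      { homEquiv := fun X Y =>
          { toFun := fun h => ObjectProperty.homMk (adj₂.homEquiv X.obj Y.obj h.hom)
            invFun := fun h => ObjectProperty.homMk ((adj₂.homEquiv X.obj Y.obj).symm h.hom)
            left_inv := fun h => by ext; simp
            right_inv := fun h => by ext; simp }
        homEquiv_naturality_left_symm := fun f g => by
          ext; simp [adj₂.homEquiv_naturality_left_symm]
        homEquiv_naturality_right := fun f g => by
          ext; simp [adj₂.homEquiv_naturality_right] }
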